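/- For a value v of PCF_H, the following are equivalent: (1) Φ; Γ ⊢^m v : []^ν, where ν = abs if v is an abstraction and ν = nat if v is a natural value; (2) Φ = ∅, Γ = ∅, and m = [] (the empty multi-counter). -/
import Mathlib


/-- PCF_H terms. -/
inductive Tm : Type
  | var : String → Tm
  | lam : String → Tm → Tm
  | app : Tm → Tm → Tm
  | zero : Tm
  | succ : Tm → Tm
  | ifz : Tm → Tm → String → Tm → Tm
  | fix : String → Tm → Tm
deriving DecidableEq

/-- Substitution t[x:=s]. -/
def subst (t : Tm) (x : String) (s : Tm) : Tm :=
  match t with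
  | .var y => if y = x then s else .var y
  | .lam y b => if y = x then .lam y b else .lam y (subst b x s)
  | .app a b => .app (subst a x s) (subst b x s)
  | .zero => .zero
  | .succ a => .succ (subst a x s)
  | .ifz a b y c => .ifz (subst a x s) (subst b x s) y (if y = x then c else subst c x s)
  | .fix y b => if y = x then .fix y b else .fix y (subst b x s)

/-- Free variables. -/
def fv : Tm → Finset String
  | .var y => {y}
  | .lam y b => fv b \ {y}
  | .app a b => fv a ∪ fv b
  | .zero => ∅
  | .succ a => fv a
  | .ifz a b y c => fv a ∪ fv b ∪ (fv c \ {y})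
  | .fix y b => fv b \ {y}

def Closed (t : Tm) : Prop := fv t = ∅

/-- Natural values k ::= 0 | S(k). -/
inductive NatVal : Tm → Prop
  | zero : NatVal .zero
  | succ {k} : NatVal k → NatVal (.succ k)

/-- Values v ::= λx.t | k. -/
inductive Value : Tm → Prop
  | lam (x t) : Value (.lam x t)
  | nat {k} : NatVal k → Value k

inductive RuleName | B | I0 | IS | F
deriving DecidableEq

/-- Reduction indexed by rule names. -/
inductive Step : RuleName → Tm → Tm → Prop
  | beta {x t v} : Value v → Step .B (.app (.lam x t) v) (subst t x v)
  | if0 {t x s} : Step .I0 (.ifz .zero t x s) t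
  | ifS {k t x s} : NatVal k → Step .IS (.ifz (.succ k) t x s) (subst s x k)
  | fixp {x t} : Step .F (.fix x t) (subst t x (.fix x t))
  | appL {ρ t t' s} : Step ρ t t' → Step ρ (.app t s) (.app t' s)
  | appR {ρ t s s'} : Step ρ s s' → Step ρ (.app t s) (.app t s')
  | succC {ρ t t'} : Step ρ t t' → Step ρ (.succ t) (.succ t')
  | ifzC {ρ t t' s x u} : Step ρ t t' → Step ρ (.ifz t s x u) (.ifz t' s x u)

def Red (t s : Tm) : Prop := ∃ ρ, Step ρ t s

def Irred (t : Tm) : Prop := ∀ s, ¬ Red t s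

/-- n-step reduction. -/
inductive RedN : ℕ → Tm → Tm → Prop
  | refl (t) : RedN 0 t t
  | step {n t s u} : Red t s → RedN n s u → RedN (n+1) t u

/-- Labelled reduction sequences. -/
inductive RedL : List RuleName → Tm → Tm → Prop
  | refl (t) : RedL [] t t
  | step {ρ l t s u} : Step ρ t s → RedL l s u → RedL (ρ :: l) t u

/-- Fallible natures. -/
inductive Nature | abs | nat | stuck
deriving DecidableEq

/-- Normal forms indexed by fallible natures. -/
inductive NF : Nature → Tm → Prop
  | nfAbs (x t) : NF .abs (.lam x t)
  | nfApp {ε ε' t s} : NF ε t → ε ≠ .abs → NF ε' s → NF .stuck (.app t s)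
  | nfZero : NF .nat .zero
  | nfSuccNat {t} : NF .nat t → NF .nat (.succ t)
  | nfSuccErr {ε t} : NF ε t → ε ≠ .nat → NF .stuck (.succ t)
  | nfIf {ε t s x u} : NF ε t → ε ≠ .nat → NF .stuck (.ifz t s x u)

/-- Proper natures. -/
inductive PNature | abs | nat
deriving DecidableEq

def PNature.toNature : PNature → Nature
  | .abs => .abs
  | .nat => .nat

mutual
inductive Ty : Type
  | arr : OMTy → MTy → Ty
  | tzero : Ty
  | tsucc : MTy → Ty
inductive MTy : Type
  | mk : PNature → List Ty → MTy
inductive OMTy : Type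
  | bot : OMTy
  | of : MTy → OMTy
end

def MTy.nature : MTy → PNature | .mk ν _ => ν
def MTy.tys : MTy → List Ty | .mk _ l => l

def Ty.IsNatTy : Ty → Prop
  | .tzero => True
  | .tsucc _ => True
  | .arr _ _ => False

instance : Add MTy := ⟨fun T S => .mk T.nature (T.tys ++ S.tys)⟩

instance : Zero OMTy := ⟨.bot⟩

instance : Add OMTy := ⟨fun a b =>
  match a, b with
  | .bot, b => b
  | .of T, .bot => .of T
  | .of T, .of S => .of (T + S)⟩

abbrev MCnt := Multiset RuleName
abbrev FamCtx := String → Multiset MTy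
abbrev TyCtx := String → OMTy

/-- Sum of a finite family. -/
def fsum {α} [Add α] [Zero α] {n : ℕ} (f : Fin n → α) : α :=
  (List.ofFn f).foldr (· + ·) 0

/-- Subsumption. -/
inductive Subs : OMTy → MTy → Prop
  | bot (ν) : Subs .bot (.mk ν [])
  | refl (T) : Subs (.of T) T

/-- The typing judgment Φ; Γ ⊢^m t : T of system H. -/
inductive Typing : FamCtx → TyCtx → MCnt → Tm → MTy → Prop
  | var1 (x : String) (T : MTy) :
      Typing 0 (Function.update (0 : TyCtx) x (OMTy.of T)) 0 (.var x) T
  | var2 (x : String) (T : MTy) :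
      Typing (Function.update (0 : FamCtx) x {T}) 0 0 (.var x) T
  | abs {x t} (n : ℕ) (Φ : Fin n → FamCtx) (Γ : Fin n → TyCtx) (m : Fin n → MCnt)
      (To : Fin n → OMTy) (S : Fin n → MTy) :
      (∀ i, Typing (Φ i) (Function.update (Γ i) x (To i)) (m i) t (S i)) →
      Typing (fsum Φ) (fsum Γ) (fsum m) (.lam x t)
        (.mk .abs (List.ofFn fun i => Ty.arr (To i) (S i)))
  | app {Φ₁ Γ₁ m₁ t To S Φ₂ Γ₂ m₂ s T} :
      Typing Φ₁ Γ₁ m₁ t (.mk .abs [Ty.arr To S]) →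
      Subs To T →
      Typing Φ₂ Γ₂ m₂ s T →
      Typing (Φ₁ + Φ₂) (Γ₁ + Γ₂) ({RuleName.B} + m₁ + m₂) (.app t s) S
  | zero (n : ℕ) : Typing 0 0 0 .zero (.mk .nat (List.replicate n Ty.tzero))
  | succ {Φ Γ m t} (k : ℕ) (N : Fin k → List Ty) :
      Typing Φ Γ m t (.mk .nat (List.ofFn N).flatten) →
      Typing Φ Γ m (.succ t) (.mk .nat (List.ofFn fun i => Ty.tsucc (.mk .nat (N i))))
  | ifZero {Φ₁ Γ₁ m₁ t Φ₂ Γ₂ m₂ s T x u} :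
      Typing Φ₁ Γ₁ m₁ t (.mk .nat [Ty.tzero]) →
      Typing Φ₂ Γ₂ m₂ s T →
      Typing (Φ₁ + Φ₂) (Γ₁ + Γ₂) ({RuleName.I0} + m₁ + m₂) (.ifz t s x u) T
  | ifSucc {Φ₁ Γ₁ m₁ t N No Φ₂ Γ₂ m₂ s T x u} :
      Typing Φ₁ Γ₁ m₁ t (.mk .nat [Ty.tsucc N]) →
      Subs No N →
      Typing Φ₂ (Function.update Γ₂ x No) m₂ u T →
      Typing (Φ₁ + Φ₂) (Γ₁ + Γ₂) ({RuleName.IS} + m₁ + m₂) (.ifz t s x u) T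
  | fixp {Φ Γ m x t S} (n : ℕ) (Ts : Fin n → MTy)
      (Φr : Fin n → FamCtx) (Γr : Fin n → TyCtx) (mr : Fin n → MCnt) :
      Typing (Function.update Φ x (↑(List.ofFn Ts) : Multiset MTy)) Γ m t S →
      (∀ i, Typing (Φr i) (Γr i) (mr i) (.fix x t) (Ts i)) →
      Typing (Φ + fsum Φr) (Γ + fsum Γr) ({RuleName.F} + m + fsum mr) (.fix x t) S

lemma lam_inv {Φ Γ m x t T} (h : Typing Φ Γ m (.lam x t) T) (hT : T.tys = []) :
    Φ = 0 ∧ Γ = 0 ∧ m = 0 := by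
  cases h with
  | abs n Φf Γf mf To S hT' =>
    simp [MTy.tys] at hT
    subst hT
    refine ⟨?_, ?_, ?_⟩ <;> simp [fsum, List.ofFn_zero]

lemma nat_inv {k} (hk : NatVal k) : ∀ {Φ Γ m T}, Typing Φ Γ m k T →
    Φ = 0 ∧ Γ = 0 ∧ m = 0 := by
  induction hk with
  | zero => intro Φ Γ m T h; cases h; exact ⟨rfl, rfl, rfl⟩
  | succ hk ih =>
    intro Φ Γ m T h
    cases h with
    | succ n N hT => exact ih hT

/-- values typable with the empty multitype iff empty contexts and counter. -/
theorem typable_values_emptyctx (v : Tm) (ν : PNature) (hv : Value v)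
    (hνabs : (∃ x t, v = Tm.lam x t) → ν = PNature.abs)
    (hνnat : NatVal v → ν = PNature.nat) :
    ∀ (Φ : FamCtx) (Γ : TyCtx) (m : MCnt),
      Typing Φ Γ m v (MTy.mk ν []) ↔ (Φ = 0 ∧ Γ = 0 ∧ m = 0) := by
  intro Φ Γ m
  constructor
  · intro h
    cases hv with
    | lam x t => exact lam_inv h rfl
    | nat hk => exact nat_inv hk h
  · rintro ⟨rfl, rfl, rfl⟩
    cases hv with
    | lam x t =>
      rw [hνabs ⟨x, t, rfl⟩]
      have := Typing.abs (n := 0) (x := x) (t := t) Fin.elim0 Fin.elim0 Fin.elim0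
        Fin.elim0 Fin.elim0 (fun i => i.elim0)
      simpa [fsum, List.ofFn_zero] using this
    | nat hk =>
      rw [hνnat hk]
      clear hνnat hνabs
      induction hk with
      | zero => exact Typing.zero 0
      | succ hk ih =>
        have := Typing.succ (k := 0) Fin.elim0 (by simpa [List.ofFn_zero] using ih)
        simpa [List.ofFn_zero] using this
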